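/- Let V be a finite set with at least two elements, fix t₁ ∈ V, and let p : V → ℝ with p(k) > 0 for all k and Σ_{k ∈ V} p(k) = 1. Then there exists ε > 0, depending only on p, such that for every q : V → ℝ with q(k) > 0 for all k, Σ_{k ∈ V} q(k) = 1, and max_{k ∈ V} |p(k) − q(k)| < ε, the following holds: if (U_k)_{k ∈ V} are independent standard Gumbel random variables, and E_p denotes the event {∀ k ≠ t₁, log p(t₁) + U_{t₁} > log p(k) + U_k} and E_q the event {∀ k ≠ t₁, log q(t₁) + U_{t₁} > log q(k) + U_k}, then P(E_p ∩ E_q) > P(E_p)·P(E_q). -/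

import Mathlib

open MeasureTheory ProbabilityTheory

noncomputable def stdGumbel : Measure ℝ :=
  volume.withDensity fun x => ENNReal.ofReal (Real.exp (-x - Real.exp (-x)))

/-!
Write `E_a` for the event that `t` is the strict argmax of `a + U`. Integrating out `U t = x`,
the Gumbel CDF `exp (-exp (-y))` turns `P(E_a)` into `∫ exp (-A e^{-x}) dGumbel(x) = 1 / (1 + A)`
with `A = ∑_{k ≠ t} exp (a k - a t)`. The event `E_a ∩ E_b` is again of this form, for the scores
`max (a k - a t) (b k - b t)`, so its `C` satisfies `C ≤ A + B`. With a second token, `A, B > 0`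
and `1 / (1 + C) ≥ 1 / (1 + A + B) > 1 / ((1 + A) (1 + B))`.
-/

open Set Filter Topology Real

section NonnegDeriv

variable {g g' : ℝ → ℝ} {m : ℝ}

theorem integrableOn_Iic_deriv_of_nonneg (hderiv : ∀ x, HasDerivAt g (g' x) x)
    (hg' : ∀ x, 0 ≤ g' x) (hbot : Tendsto g atBot (𝓝 m)) (a : ℝ) :
    IntegrableOn g' (Iic a) := by
  have hrefl : IntegrableOn (fun x => g' (-x)) (Ioi (-a)) := by
    refine integrableOn_Ioi_deriv_of_nonneg' (g := fun x => -g (-x)) (fun x _ => ?_)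
      (fun x _ => hg' (-x)) ((hbot.comp tendsto_neg_atTop_atBot).neg)
    exact (((hderiv (-x)).comp x (hasDerivAt_neg x)).fun_neg).congr_deriv (by simp)
  have := ((Measure.measurePreserving_neg (volume : Measure ℝ)).integrableOn_comp_preimage
    (Homeomorph.neg ℝ).measurableEmbedding).2 hrefl
  rw [Set.neg_preimage, Set.neg_Ioi, neg_neg] at this
  exact (this.congr_fun (fun x _ => by simp) measurableSet_Iio).congr_set_ae Iio_ae_eq_Iic.symm

theorem lintegral_Iic_ofReal_deriv_of_nonneg (hderiv : ∀ x, HasDerivAt g (g' x) x)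
    (hg' : ∀ x, 0 ≤ g' x) (hbot : Tendsto g atBot (𝓝 m)) (a : ℝ) :
    ∫⁻ x in Iic a, ENNReal.ofReal (g' x) = ENNReal.ofReal (g a - m) := by
  have hint := integrableOn_Iic_deriv_of_nonneg hderiv hg' hbot a
  rw [← ofReal_integral_eq_lintegral_ofReal hint (.of_forall hg'),
    integral_Iic_of_hasDerivAt_of_tendsto' (fun x _ => hderiv x) hint hbot]

theorem lintegral_ofReal_deriv_of_nonneg (hderiv : ∀ x, HasDerivAt g (g' x) x)
    (hg' : ∀ x, 0 ≤ g' x) {n : ℝ} (hbot : Tendsto g atBot (𝓝 m))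
    (htop : Tendsto g atTop (𝓝 n)) :
    ∫⁻ x, ENNReal.ofReal (g' x) = ENNReal.ofReal (n - m) := by
  have hint : Integrable g' := by
    rw [← integrableOn_univ, ← Iic_union_Ioi (a := (0 : ℝ))]
    exact (integrableOn_Iic_deriv_of_nonneg hderiv hg' hbot 0).union
      (integrableOn_Ioi_deriv_of_nonneg' (fun x _ => hderiv x) (fun x _ => hg' x) htop)
  rw [← ofReal_integral_eq_lintegral_ofReal hint (.of_forall hg'),
    integral_of_hasDerivAt_of_tendsto hderiv hint hbot htop]

end NonnegDeriv

section Gumbel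

theorem hasDerivAt_exp_neg_mul_exp_neg (S x : ℝ) :
    HasDerivAt (fun x => exp (-S * exp (-x))) (S * exp (-x - S * exp (-x))) x := by
  have := (((hasDerivAt_neg x).exp).const_mul (-S)).exp
  convert this using 1
  rw [sub_eq_add_neg, exp_add]
  ring_nf

theorem tendsto_exp_neg_mul_exp_neg_atBot {S : ℝ} (hS : 0 < S) :
    Tendsto (fun x => exp (-S * exp (-x))) atBot (𝓝 0) :=
  tendsto_exp_atBot.comp <| (tendsto_exp_atTop.comp tendsto_neg_atBot_atTop).const_mul_atTop_of_neg
    (neg_lt_zero.2 hS)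

theorem tendsto_exp_neg_mul_exp_neg_atTop (S : ℝ) :
    Tendsto (fun x => exp (-S * exp (-x))) atTop (𝓝 1) := by
  have := (continuous_exp.tendsto _).comp (tendsto_exp_neg_atTop_nhds_zero.const_mul (-S))
  simpa [Function.comp_def] using this

theorem stdGumbel_Iio (y : ℝ) : stdGumbel (Iio y) = ENNReal.ofReal (exp (-exp (-y))) := by
  rw [stdGumbel, withDensity_apply _ measurableSet_Iio, setLIntegral_congr Iio_ae_eq_Iic]
  simpa using lintegral_Iic_ofReal_deriv_of_nonneg (hasDerivAt_exp_neg_mul_exp_neg 1)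
    (fun x => by positivity) (tendsto_exp_neg_mul_exp_neg_atBot one_pos) y

theorem lintegral_exp_neg_mul_exp_neg_stdGumbel {T : ℝ} (hT : 0 ≤ T) :
    ∫⁻ x, ENNReal.ofReal (exp (-T * exp (-x))) ∂stdGumbel = ENNReal.ofReal (1 / (1 + T)) := by
  have hT1 : 0 < 1 + T := by linarith
  have hdens : ∀ x, ENNReal.ofReal (exp (-x - exp (-x))) * ENNReal.ofReal (exp (-T * exp (-x))) =
      ENNReal.ofReal (1 / (1 + T)) *
        ENNReal.ofReal ((1 + T) * exp (-x - (1 + T) * exp (-x))) := by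
    intro x
    rw [← ENNReal.ofReal_mul (by positivity), ← ENNReal.ofReal_mul (by positivity), ← exp_add]
    field_simp
    ring_nf
  rw [stdGumbel, lintegral_withDensity_eq_lintegral_mul _ (by fun_prop) (by fun_prop)]
  simp only [Pi.mul_apply, hdens]
  rw [lintegral_const_mul' _ _ ENNReal.ofReal_ne_top,
    lintegral_ofReal_deriv_of_nonneg (hasDerivAt_exp_neg_mul_exp_neg (1 + T))
      (fun x => by positivity) (tendsto_exp_neg_mul_exp_neg_atBot hT1)
      (tendsto_exp_neg_mul_exp_neg_atTop (1 + T))]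
  simp

instance : IsProbabilityMeasure stdGumbel :=
  ⟨by simpa using lintegral_exp_neg_mul_exp_neg_stdGumbel le_rfl⟩

end Gumbel

section PerturbedArgmax

variable {V : Type*}

def perturbedArgmaxSet (a : V → ℝ) (t : V) : Set (V → ℝ) :=
  {u | ∀ k ≠ t, a k + u k < a t + u t}

theorem measurableSet_perturbedArgmaxSet [Countable V] (a : V → ℝ) (t : V) :
    MeasurableSet (perturbedArgmaxSet a t) := by
  simp only [perturbedArgmaxSet, ofPred_forall]
  exact .iInter fun k => .iInter fun _ =>
    measurableSet_lt (by fun_prop) (by fun_prop)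

theorem perturbedArgmaxSet_inter (a b : V → ℝ) (t : V) :
    perturbedArgmaxSet a t ∩ perturbedArgmaxSet b t =
      perturbedArgmaxSet (fun k => max (a k - a t) (b k - b t)) t := by
  ext u
  simp only [perturbedArgmaxSet, mem_inter_iff, mem_ofPred_eq, sub_self, max_self, zero_add]
  refine ⟨fun ⟨ha, hb⟩ k hk => ?_, fun h => ⟨fun k hk => ?_, fun k hk => ?_⟩⟩
  · rw [← max_add_add_right]
    exact max_lt (by linarith [ha k hk]) (by linarith [hb k hk])
  · linarith [h k hk, le_max_left (a k - a t) (b k - b t)]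
  · linarith [h k hk, le_max_right (a k - a t) (b k - b t)]

variable [Fintype V] [DecidableEq V]

theorem measure_pi_perturbedArgmaxSet (μ : Measure ℝ) [SigmaFinite μ] (a : V → ℝ) (t : V) :
    Measure.pi (fun _ : V => μ) (perturbedArgmaxSet a t) =
      ∫⁻ x, ∏ k : {k // k ≠ t}, μ (Iio (a t + x - a k)) ∂μ := by
  set e := MeasurableEquiv.piEquivPiSubtypeProd (fun _ : V => ℝ) (· = t)
  have he := (measurePreserving_piEquivPiSubtypeProd (fun _ : V => μ) (· = t)).symm e
  have hslice : ∀ y : {k // k = t} → ℝ, Prod.mk y ⁻¹' (e.symm ⁻¹' perturbedArgmaxSet a t) =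
      univ.pi fun k : {k // k ≠ t} => Iio (a t + y default - a k) := by
    intro y
    ext z
    have hval (k : V) : e.symm (y, z) k = if h : k = t then y ⟨k, h⟩ else z ⟨k, h⟩ := rfl
    simp only [perturbedArgmaxSet, mem_preimage, mem_ofPred_eq, mem_univ_pi, mem_Iio,
      Subtype.forall]
    refine forall_congr' fun k => forall_congr' fun hk => ?_
    rw [hval, hval, dif_neg hk, dif_pos rfl, lt_sub_iff_add_lt']
    rfl
  rw [← he.measure_preimage_equiv, Measure.prod_apply
    (e.symm.measurable (measurableSet_perturbedArgmaxSet a t))]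
  simp only [hslice, Measure.pi_pi]
  -- `convert` reconciles the `Fintype` instances `Subtype.fintype` and `Unique.fintype`.
  convert (measurePreserving_funUnique μ {k // k = t}).lintegral_comp_emb
    (MeasurableEquiv.measurableEmbedding _)
    (fun x => ∏ k : {k // k ≠ t}, μ (Iio (a t + x - a k))) using 4
  rfl

theorem measure_pi_stdGumbel_perturbedArgmaxSet (a : V → ℝ) (t : V) :
    Measure.pi (fun _ : V => stdGumbel) (perturbedArgmaxSet a t) =
      ENNReal.ofReal (1 / (1 + ∑ k : {k // k ≠ t}, exp (a k - a t))) := by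
  have hcdf : ∀ x, ∏ k : {k // k ≠ t}, stdGumbel (Iio (a t + x - a k)) =
      ENNReal.ofReal (exp (-(∑ k : {k // k ≠ t}, exp (a k - a t)) * exp (-x))) := by
    intro x
    simp only [stdGumbel_Iio]
    rw [← ENNReal.ofReal_prod_of_nonneg (fun _ _ => by positivity), ← exp_sum, neg_mul,
      Finset.sum_mul, ← Finset.sum_neg_distrib]
    congr 3 with k
    rw [← exp_add]
    ring_nf
  simp only [measure_pi_perturbedArgmaxSet, hcdf]
  exact lintegral_exp_neg_mul_exp_neg_stdGumbel (by positivity)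

end PerturbedArgmax

theorem sum_exp_max_le {ι : Type*} (s : Finset ι) (f g : ι → ℝ) :
    ∑ i ∈ s, exp (max (f i) (g i)) ≤ ∑ i ∈ s, exp (f i) + ∑ i ∈ s, exp (g i) := by
  rw [← Finset.sum_add_distrib]
  refine Finset.sum_le_sum fun i _ => ?_
  rw [exp_monotone.map_max]
  exact max_le_add_of_nonneg (exp_pos _).le (exp_pos _).le

theorem one_div_one_add_mul_one_div_one_add_lt {A B C : ℝ} (hA : 0 < A) (hB : 0 < B)
    (hC : 0 ≤ C) (hCAB : C ≤ A + B) : 1 / (1 + A) * (1 / (1 + B)) < 1 / (1 + C) := by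
  rw [div_mul_div_comm, one_mul, div_lt_div_iff₀ (by positivity) (by positivity)]
  nlinarith [mul_pos hA hB]

theorem coupled_gumbel_max_positively_correlated_general
    {V : Type*} [Fintype V] (hV : 2 ≤ Fintype.card V) (t₁ : V)
    (p : V → ℝ) :
    ∃ ε > 0, ∀ q : V → ℝ, (∀ k, 0 < q k) → (∑ k, q k = 1) →
      (∀ k, |p k - q k| < ε) →
      ∀ (Ω : Type) (_ : MeasurableSpace Ω) (P : Measure Ω), IsProbabilityMeasure P →
      ∀ U : V → Ω → ℝ, (∀ k, Measurable (U k)) →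
        iIndepFun U P →
        (∀ k, P.map (U k) = stdGumbel) →
        P ({ω | ∀ k ≠ t₁, Real.log (p k) + U k ω < Real.log (p t₁) + U t₁ ω} ∩
            {ω | ∀ k ≠ t₁, Real.log (q k) + U k ω < Real.log (q t₁) + U t₁ ω}) >
          P {ω | ∀ k ≠ t₁, Real.log (p k) + U k ω < Real.log (p t₁) + U t₁ ω} *
            P {ω | ∀ k ≠ t₁, Real.log (q k) + U k ω < Real.log (q t₁) + U t₁ ω} := by
  classical
  refine ⟨1, one_pos, fun q _ _ _ Ω _ P _ U hU hindep hgumbel => ?_⟩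
  set X : Ω → V → ℝ := fun ω k => U k ω
  have hX : P.map X = Measure.pi fun _ => stdGumbel := by
    rw [hindep.map_fun_eq_pi_map fun k => (hU k).aemeasurable]
    simp only [hgumbel]
  have hprob (a : V → ℝ) : P (X ⁻¹' perturbedArgmaxSet a t₁) =
      ENNReal.ofReal (1 / (1 + ∑ k : {k // k ≠ t₁}, exp (a k - a t₁))) := by
    rw [← Measure.map_apply (measurable_pi_lambda _ hU) (measurableSet_perturbedArgmaxSet a t₁),
      hX, measure_pi_stdGumbel_perturbedArgmaxSet]
  change P (X ⁻¹' perturbedArgmaxSet (log ∘ p) t₁ ∩ X ⁻¹' perturbedArgmaxSet (log ∘ q) t₁) >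
    P (X ⁻¹' perturbedArgmaxSet (log ∘ p) t₁) * P (X ⁻¹' perturbedArgmaxSet (log ∘ q) t₁)
  rw [← preimage_inter, perturbedArgmaxSet_inter, hprob, hprob, hprob,
    ← ENNReal.ofReal_mul (by positivity), gt_iff_lt, ENNReal.ofReal_lt_ofReal_iff (by positivity)]
  obtain ⟨k, hk⟩ := Fintype.exists_ne_of_one_lt_card hV t₁
  have : Nonempty {k // k ≠ t₁} := ⟨⟨k, hk⟩⟩
  refine one_div_one_add_mul_one_div_one_add_lt (by positivity) (by positivity) (by positivity) ?_
  simpa only [sub_self, max_self, sub_zero] using sum_exp_max_le _ _ _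

/-- **Positive correlation of coupled Gumbel-max successes.** Fix a correct token `t₁` and a
probability vector `p` with positive entries on a finite set `V` with at least two elements.
Then there is `ε > 0`, depending only on `p`, such that for every probability vector `q` with
positive entries and `max_k |p k − q k| < ε`, and every family `(U_k)` of independent standard
Gumbel random variables, the events that `t₁` is the Gumbel-max argmax under `p` and under `q`
(with shared noise `U`) are strictly positively correlated. -/
theorem coupled_gumbel_max_positively_correlated
    {V : Type*} [Fintype V] (hV : 2 ≤ Fintype.card V) (t₁ : V)
    (p : V → ℝ) (hp : ∀ k, 0 < p k) (hps : ∑ k, p k = 1) :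
    ∃ ε > 0, ∀ q : V → ℝ, (∀ k, 0 < q k) → (∑ k, q k = 1) →
      (∀ k, |p k - q k| < ε) →
      ∀ (Ω : Type) (_ : MeasurableSpace Ω) (P : Measure Ω), IsProbabilityMeasure P →
      ∀ U : V → Ω → ℝ, (∀ k, Measurable (U k)) →
        iIndepFun U P →
        (∀ k, P.map (U k) = stdGumbel) →
        P ({ω | ∀ k ≠ t₁, Real.log (p k) + U k ω < Real.log (p t₁) + U t₁ ω} ∩
            {ω | ∀ k ≠ t₁, Real.log (q k) + U k ω < Real.log (q t₁) + U t₁ ω}) >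
          P {ω | ∀ k ≠ t₁, Real.log (p k) + U k ω < Real.log (p t₁) + U t₁ ω} *
            P {ω | ∀ k ≠ t₁, Real.log (q k) + U k ω < Real.log (q t₁) + U t₁ ω} :=
  coupled_gumbel_max_positively_correlated_general hV t₁ p
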